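/- arXiv:2009.09841 — 2 statements merged into one kernel-verified Lean document; each statement's English description precedes it below -/
import Mathlib

section
/- Let m, n be positive natural numbers, let φ : Fin n → Fin m → ℝ, let Φ, Φ̂ : Fin n → ℝ, let α > 0, and let π_α(Φ) = 1 / (1 + exp(α·Φ)). Define Δ²(L) := (1/m) · ∑_{j=1}^m ( ∑_{i=1}^n (π_α(Φ̂_i) − π_α(Φ_i)) · φ_{i,j} )². Then Δ²(L) ≤ (α²/(16·m)) · ( ∑_{i=1}^n (Φ̂_i − Φ_i)² ) · ( ∑_{i=1}^n ∑_{j=1}^m φ_{i,j}² ). In particular, the deviation of the validation loss under inaccurate influence estimates is controlled by the hyper-parameter α. -/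
/-!
The sampling probability is `1 / (1 + exp t) = sigmoid (-t)`, and the sigmoid is `1/4`-Lipschitz
because its derivative `σ (1 - σ)` never exceeds `1/4`. Hence each coefficient
`π_α(Φ̂ᵢ) - π_α(Φᵢ)` is at most `α/4 · |Φ̂ᵢ - Φᵢ|` in absolute value, and Cauchy–Schwarz in `i`,
summed over the validation instances `j`, gives the bound.
-/

open Finset

namespace Real

lemma one_div_one_add_exp (x : ℝ) : 1 / (1 + exp x) = sigmoid (-x) := by
  rw [sigmoid_def, neg_neg, one_div]

lemma sigmoid_mul_one_sub_sigmoid_le (x : ℝ) : sigmoid x * (1 - sigmoid x) ≤ 1 / 4 := by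
  nlinarith [sq_nonneg (sigmoid x - 1 / 2)]

lemma lipschitzWith_sigmoid : LipschitzWith (1 / 4) sigmoid := by
  refine lipschitzWith_of_nnnorm_deriv_le differentiable_sigmoid fun x => ?_
  rw [← NNReal.coe_le_coe, coe_nnnorm, deriv_sigmoid, norm_of_nonneg
    (mul_nonneg (sigmoid_nonneg x) (sub_nonneg.mpr (sigmoid_le_one x)))]
  exact_mod_cast sigmoid_mul_one_sub_sigmoid_le x

lemma sq_sigmoid_neg_mul_sub_le (α a b : ℝ) :
    (sigmoid (-(α * a)) - sigmoid (-(α * b))) ^ 2 ≤ α ^ 2 / 16 * (a - b) ^ 2 := by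
  have hlip : |sigmoid (-(α * a)) - sigmoid (-(α * b))| ≤ 1 / 4 * |α * (b - a)| := by
    have := lipschitzWith_sigmoid.dist_le_mul (-(α * a)) (-(α * b))
    rw [dist_eq, dist_eq, neg_sub_neg, ← mul_sub] at this
    exact_mod_cast this
  calc (sigmoid (-(α * a)) - sigmoid (-(α * b))) ^ 2
      = |sigmoid (-(α * a)) - sigmoid (-(α * b))| ^ 2 := (sq_abs _).symm
    _ ≤ (1 / 4 * |α * (b - a)|) ^ 2 := by gcongr
    _ = α ^ 2 / 16 * (a - b) ^ 2 := by rw [mul_pow, sq_abs]; ring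

end Real

theorem sum_sq_sum_mul_le {R ι κ : Type*} [CommSemiring R] [LinearOrder R]
    [IsStrictOrderedRing R] [ExistsAddOfLE R] [Fintype ι] [Fintype κ] (d : ι → R) (φ : ι → κ → R) :
    ∑ j, (∑ i, d i * φ i j) ^ 2 ≤ (∑ i, d i ^ 2) * ∑ i, ∑ j, φ i j ^ 2 :=
  calc ∑ j, (∑ i, d i * φ i j) ^ 2 ≤ ∑ j, (∑ i, d i ^ 2) * ∑ i, φ i j ^ 2 :=
        sum_le_sum fun j _ => sum_mul_sq_le_sq_mul_sq _ _ _
    _ = (∑ i, d i ^ 2) * ∑ i, ∑ j, φ i j ^ 2 := by rw [← mul_sum, sum_comm]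

theorem influence_subsampling_deviation_bound_sigmoid_general
    (m n : ℕ)
    (φ : Fin n → Fin m → ℝ) (Φ Φhat : Fin n → ℝ) (α : ℝ) :
    (1 / (m : ℝ)) *
        ∑ j : Fin m,
          (∑ i : Fin n,
            (1 / (1 + Real.exp (α * Φhat i)) - 1 / (1 + Real.exp (α * Φ i))) * φ i j) ^ 2 ≤
      (α ^ 2 / (16 * (m : ℝ))) * (∑ i : Fin n, (Φhat i - Φ i) ^ 2) *
        (∑ i : Fin n, ∑ j : Fin m, (φ i j) ^ 2) := by
  simp only [Real.one_div_one_add_exp]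
  have hcoeff : ∑ i, (Real.sigmoid (-(α * Φhat i)) - Real.sigmoid (-(α * Φ i))) ^ 2 ≤
      α ^ 2 / 16 * ∑ i, (Φhat i - Φ i) ^ 2 := by
    rw [mul_sum]
    exact sum_le_sum fun i _ => Real.sq_sigmoid_neg_mul_sub_le α (Φhat i) (Φ i)
  calc _ ≤ 1 / (m : ℝ) * ((α ^ 2 / 16 * ∑ i, (Φhat i - Φ i) ^ 2) * ∑ i, ∑ j, φ i j ^ 2) := by
        gcongr
        exact (sum_sq_sum_mul_le _ φ).trans (by gcongr)
    _ = _ := by ring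

/-- Proposition 1 combined with the Lipschitz property of the sigmoid sampling
function: the squared deviation of the validation loss under inaccurate influence
estimates is controlled by the hyper-parameter `α`. -/
theorem influence_subsampling_deviation_bound_sigmoid
    (m n : ℕ) (hm : 0 < m) (hn : 0 < n)
    (φ : Fin n → Fin m → ℝ) (Φ Φhat : Fin n → ℝ) (α : ℝ) (hα : 0 < α) :
    (1 / (m : ℝ)) *
        ∑ j : Fin m,
          (∑ i : Fin n,
            (1 / (1 + Real.exp (α * Φhat i)) - 1 / (1 + Real.exp (α * Φ i))) * φ i j) ^ 2 ≤
      (α ^ 2 / (16 * (m : ℝ))) * (∑ i : Fin n, (Φhat i - Φ i) ^ 2) *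
        (∑ i : Fin n, ∑ j : Fin m, (φ i j) ^ 2) :=
  influence_subsampling_deviation_bound_sigmoid_general m n φ Φ Φhat α
end

section
/- Let n ∈ ℕ be positive, let ℓ_1, …, ℓ_n : ℝ^d → ℝ, ℓ : ℝ^d → ℝ, and ℓ^v : ℝ^d → ℝ be differentiable functions with differentiable gradients, let θ : ℝ → ℝ^d be a differentiable curve with θ(0) = θ̂ satisfying (1/n)·∑_{i'} ∇ℓ_{i'}(θ(ε)) + ε·∇ℓ(θ(ε)) = 0 for all ε ∈ ℝ, and assume H := (1/n)·∑_{i'} ∇²ℓ_{i'}(θ̂) is invertible. Then the derivative of the map ε ↦ ℓ^v(θ(ε)) at ε = 0 equals −⟪∇ℓ^v(θ̂), H^{−1} ∇ℓ(θ̂)⟫. -/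
/-!
Differentiating the first-order condition `(1/n) ∑ ∇ℓᵢ(θ ε) + ε ∇ℓ(θ ε) = 0` at `ε = 0` gives
`H θ'(0) + ∇ℓ(θ̂) = 0`, so `θ'(0) = -H⁻¹ ∇ℓ(θ̂)` since `H` is invertible; by the chain rule the
derivative of `ε ↦ ℓᵛ(θ ε)` at `0` is `⟪∇ℓᵛ(θ̂), θ'(0)⟫`.
-/

theorem apply_add_eq_zero_of_forall_add_smul_eq_zero {E F : Type*} [NormedAddCommGroup E]
    [NormedSpace ℝ E] [NormedAddCommGroup F] [NormedSpace ℝ F] {G g : E → F} {G' : E →L[ℝ] F}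
    {θ : ℝ → E} {v : E} (hG : HasFDerivAt G G' (θ 0)) (hg : DifferentiableAt ℝ g (θ 0))
    (hθ : HasDerivAt θ v 0) (h : ∀ ε : ℝ, G (θ ε) + ε • g (θ ε) = 0) :
    G' v + g (θ 0) = 0 := by
  have hderiv : HasDerivAt (fun ε : ℝ => G (θ ε) + ε • g (θ ε)) (G' v + g (θ 0)) 0 := by
    simpa using (hG.comp_hasDerivAt 0 hθ).fun_add
      ((hasDerivAt_id' 0).fun_smul (hg.hasFDerivAt.comp_hasDerivAt 0 hθ))
  exact hderiv.unique (by simpa only [h] using hasDerivAt_const (0 : ℝ) (0 : F))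

theorem ContinuousLinearMap.eq_neg_inverse_apply_of_apply_add_eq_zero {R E : Type*}
    [Semiring R] [TopologicalSpace E] [AddCommGroup E] [Module R E]
    {H : E →L[R] E} (hH : IsUnit H) {v w : E} (h : H v + w = 0) :
    v = -Ring.inverse H w := by
  obtain ⟨u, rfl⟩ := hH
  have hu := congrArg (↑u⁻¹ : E →L[R] E) h
  rw [map_add, map_zero, ← mul_apply_eq_comp, Units.inv_mul, one_apply_eq_self] at hu
  rw [Ring.inverse_unit]
  exact eq_neg_of_add_eq_zero_left hu

theorem HasGradientAt.comp_hasDerivAt_inner {E : Type*} [NormedAddCommGroup E]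
    [InnerProductSpace ℝ E] [CompleteSpace E] {f : E → ℝ} {f' : E} {θ : ℝ → E} {v : E} {t : ℝ}
    (hf : HasGradientAt f f' (θ t)) (hθ : HasDerivAt θ v t) :
    HasDerivAt (fun ε => f (θ ε)) (inner ℝ f' v) t := by
  have h := hf.hasFDerivAt.comp_hasDerivAt t hθ
  rwa [InnerProductSpace.toDual_apply_apply] at h

theorem influence_function_validation_loss_derivative_general
    (d n : ℕ)
    (ℓs : Fin n → EuclideanSpace ℝ (Fin d) → ℝ)
    (ℓ : EuclideanSpace ℝ (Fin d) → ℝ)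
    (ℓv : EuclideanSpace ℝ (Fin d) → ℝ)
    (hℓs' : ∀ i, Differentiable ℝ (fun x => gradient (ℓs i) x))
    (hℓ' : Differentiable ℝ (fun x => gradient ℓ x))
    (hℓv : Differentiable ℝ ℓv)
    (θ : ℝ → EuclideanSpace ℝ (Fin d)) (hθ : Differentiable ℝ θ)
    (θhat : EuclideanSpace ℝ (Fin d)) (hθ0 : θ 0 = θhat)
    (hopt : ∀ ε : ℝ,
      (1 / (n : ℝ)) • ∑ i : Fin n, gradient (ℓs i) (θ ε) + ε • gradient ℓ (θ ε) = 0)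
    (H : EuclideanSpace ℝ (Fin d) →L[ℝ] EuclideanSpace ℝ (Fin d))
    (hH : H = (1 / (n : ℝ)) •
      ∑ i : Fin n, fderiv ℝ (fun x => gradient (ℓs i) x) θhat)
    (hHunit : IsUnit H) :
    deriv (fun ε : ℝ => ℓv (θ ε)) 0 =
      -(inner ℝ (gradient ℓv θhat) ((Ring.inverse H) (gradient ℓ θhat)) : ℝ) := by
  subst hθ0 hH
  have hθ' : HasDerivAt θ (deriv θ 0) 0 := (hθ 0).hasDerivAt
  have hrisk : HasFDerivAt (fun x => (1 / (n : ℝ)) • ∑ i : Fin n, gradient (ℓs i) x)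
      ((1 / (n : ℝ)) • ∑ i : Fin n, fderiv ℝ (fun x => gradient (ℓs i) x) (θ 0)) (θ 0) :=
    (HasFDerivAt.fun_sum fun i _ => (hℓs' i (θ 0)).hasFDerivAt).fun_const_smul _
  have hstat := apply_add_eq_zero_of_forall_add_smul_eq_zero hrisk (hℓ' (θ 0)) hθ' hopt
  rw [((hℓv (θ 0)).hasGradientAt.comp_hasDerivAt_inner hθ').deriv,
    ContinuousLinearMap.eq_neg_inverse_apply_of_apply_add_eq_zero hHunit hstat, inner_neg_right]

/-- Closed-form influence function (Eq. (11)): under the same setting as the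
influence-function parameter derivative, the derivative of the validation loss
along the perturbed-minimizer curve at `ε = 0` equals
`−⟪∇ℓᵛ(θ̂), H⁻¹ ∇ℓ(θ̂)⟫`. -/
theorem influence_function_validation_loss_derivative
    (d n : ℕ) (hn : 0 < n)
    (ℓs : Fin n → EuclideanSpace ℝ (Fin d) → ℝ)
    (ℓ : EuclideanSpace ℝ (Fin d) → ℝ)
    (ℓv : EuclideanSpace ℝ (Fin d) → ℝ)
    (hℓs : ∀ i, Differentiable ℝ (ℓs i))
    (hℓs' : ∀ i, Differentiable ℝ (fun x => gradient (ℓs i) x))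
    (hℓ : Differentiable ℝ ℓ)
    (hℓ' : Differentiable ℝ (fun x => gradient ℓ x))
    (hℓv : Differentiable ℝ ℓv)
    (hℓv' : Differentiable ℝ (fun x => gradient ℓv x))
    (θ : ℝ → EuclideanSpace ℝ (Fin d)) (hθ : Differentiable ℝ θ)
    (θhat : EuclideanSpace ℝ (Fin d)) (hθ0 : θ 0 = θhat)
    (hopt : ∀ ε : ℝ,
      (1 / (n : ℝ)) • ∑ i : Fin n, gradient (ℓs i) (θ ε) + ε • gradient ℓ (θ ε) = 0)
    (H : EuclideanSpace ℝ (Fin d) →L[ℝ] EuclideanSpace ℝ (Fin d))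
    (hH : H = (1 / (n : ℝ)) •
      ∑ i : Fin n, fderiv ℝ (fun x => gradient (ℓs i) x) θhat)
    (hHunit : IsUnit H) :
    deriv (fun ε : ℝ => ℓv (θ ε)) 0 =
      -(inner ℝ (gradient ℓv θhat) ((Ring.inverse H) (gradient ℓ θhat)) : ℝ) :=
  influence_function_validation_loss_derivative_general d n ℓs ℓ ℓv hℓs' hℓ' hℓv θ hθ θhat hθ0 hopt
    H hH hHunit
end
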